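/- Let h^t denote the matrix [[1, t],[0, 1]] ∈ SL(2,ℝ). There exists a sequence (β_k)_{k≥1} of real numbers with the following property: taking kicks φ_k = h^{β_k} and kicked evolution f^{(k)}(τ) = φ_k h^τ φ_{k−1} h^τ ⋯ φ_1 h^τ, for every τ ≥ 0 there exist infinitely many k such that f^{(k)}(τ) ∈ {h^s : s ∈ [0, 1]}; in particular, for every τ ≥ 0 the sequence (f^{(k)}(τ))_{k≥1} has a subsequence contained in a compact subset of SL(2,ℝ), so it neither is unbounded along the full sequence nor goes to infinity. -/
import Mathlib


open Filter

/-- The matrix `h^t = [[1, t],[0, 1]] ∈ SL(2,ℝ)`. -/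
def hMat (t : ℝ) : Matrix (Fin 2) (Fin 2) ℝ := !![1, t; 0, 1]

/-- The kicked evolution `f^{(k)}(τ) = φ_k h^τ φ_{k-1} h^τ ⋯ φ_1 h^τ`. -/
def kickedEvol (φ : ℕ → Matrix (Fin 2) (Fin 2) ℝ) (τ : ℝ) :
    ℕ → Matrix (Fin 2) (Fin 2) ℝ
  | 0 => 1
  | k + 1 => φ (k + 1) * hMat τ * kickedEvol φ τ k

noncomputable section Aux19

def Hs (n : ℕ) : ℝ := ∑ i ∈ Finset.range n, (1 / (i + 1) : ℝ)

lemma Hs_succ (n : ℕ) : Hs (n + 1) = Hs n + 1 / (n + 1) := Finset.sum_range_succ _ n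

lemma Hs_mono : Monotone Hs := by
  apply monotone_nat_of_le_succ
  intro n
  rw [Hs_succ]
  have : (0:ℝ) ≤ 1/(n+1) := by positivity
  linarith

lemma Hs_tendsto : Tendsto Hs atTop atTop :=
  Real.tendsto_sum_range_one_div_nat_succ_atTop

lemma exists_next (n prev : ℕ) : ∃ N, prev < N ∧ Hs prev + (n + 1) ≤ Hs N := by
  obtain ⟨N, h1, h2⟩ := ((eventually_gt_atTop prev).and
    (Hs_tendsto.eventually_ge_atTop (Hs prev + (n + 1)))).exists
  exact ⟨N, h1, h2⟩

def aSeq : ℕ → ℕ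
  | 0 => 0
  | n + 1 => (exists_next n (aSeq n)).choose

lemma aSeq_lt (n : ℕ) : aSeq n < aSeq (n + 1) := (exists_next n (aSeq n)).choose_spec.1

lemma aSeq_gap (n : ℕ) : Hs (aSeq n) + (n + 1) ≤ Hs (aSeq (n + 1)) :=
  (exists_next n (aSeq n)).choose_spec.2

lemma aSeq_strictMono : StrictMono aSeq := strictMono_nat_of_lt_succ aSeq_lt

lemma aSeq_ge (n : ℕ) : n ≤ aSeq n := aSeq_strictMono.le_apply

def nIdx (k : ℕ) : ℕ := Nat.findGreatest (fun n => aSeq n < k) k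

def tSeq (k : ℕ) : ℝ := Hs (k - 1) - Hs (aSeq (nIdx k))

def Bseq (k : ℕ) : ℝ := -(k : ℝ) * tSeq k

def βseq (k : ℕ) : ℝ := Bseq k - Bseq (k - 1)

lemma nIdx_eq {n k : ℕ} (h1 : aSeq n < k) (h2 : k ≤ aSeq (n + 1)) : nIdx k = n := by
  have hnk : n ≤ k := (aSeq_ge n).trans h1.le
  refine le_antisymm ?_ (Nat.le_findGreatest hnk h1)
  by_contra h
  push_neg at h
  have hp : aSeq (nIdx k) < k :=
    Nat.findGreatest_spec (P := fun n => aSeq n < k) hnk h1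
  have : aSeq (n + 1) ≤ aSeq (nIdx k) := aSeq_strictMono.monotone h
  exact absurd (h2.trans this) (not_le.mpr hp)
  -- contradiction: k ≤ aSeq (n+1) ≤ aSeq (nIdx k) < k

lemma hMat_mul (a b : ℝ) : hMat a * hMat b = hMat (a + b) := by
  simp [hMat, Matrix.mul_fin_two]; ring_nf

lemma block_cover {a b : ℕ} (hab : a < b) {x : ℝ} (h1 : Hs a ≤ x) (h2 : x ≤ Hs b) :
    ∃ k, a < k ∧ k ≤ b ∧ Hs (k - 1) ≤ x ∧ x ≤ Hs k := by
  have hex : ∃ k, x ≤ Hs k ∧ a < k := ⟨b, h2, hab⟩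
  classical
  set k := Nat.find hex with hkdef
  obtain ⟨hk1, hk2⟩ := Nat.find_spec hex
  have hmin : ∀ m, m < k → ¬(x ≤ Hs m ∧ a < m) := fun m hm => Nat.find_min hex hm
  refine ⟨k, hk2, Nat.find_min' hex ⟨h2, hab⟩, ?_, hk1⟩
  rcases Nat.lt_or_ge a (k - 1) with h | h
  · have hk1' : k - 1 < k := by omega
    have hm := hmin _ hk1'
    by_contra hc
    push_neg at hc
    exact hm ⟨hc.le, h⟩
  · have : k - 1 = a := by omega
    rw [this]; exact h1

lemma block_exists (τ : ℝ) (hτ : 0 ≤ τ) (n : ℕ) (hn : τ ≤ n + 1) :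
    ∃ k, aSeq n < k ∧ k ≤ aSeq (n + 1) ∧
      Hs (k - 1) ≤ Hs (aSeq n) + τ ∧ Hs (aSeq n) + τ ≤ Hs k := by
  have h2 : Hs (aSeq n) + τ ≤ Hs (aSeq (n + 1)) := by
    have := aSeq_gap n
    push_cast at this ⊢
    linarith
  exact block_cover (aSeq_lt n) (by linarith) h2

lemma hMat_zero : hMat 0 = 1 := by
  simp [hMat, Matrix.one_fin_two]

lemma Bseq_zero : Bseq 0 = 0 := by simp [Bseq]

lemma evol_eq (τ : ℝ) (k : ℕ) :
    kickedEvol (fun k => hMat (βseq k)) τ k = hMat (Bseq k + k * τ) := by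
  induction k with
  | zero => simp [kickedEvol, Bseq_zero, hMat_zero]
  | succ k ih =>
    rw [kickedEvol, ih, hMat_mul, hMat_mul]
    simp only [βseq, Nat.add_sub_cancel]
    push_cast
    ring

lemma key (τ : ℝ) (hτ : 0 ≤ τ) (m : ℕ) :
    ∃ k, m ≤ k ∧ Bseq k + k * τ ∈ Set.Icc (0 : ℝ) 1 := by
  set n := m + ⌈τ⌉₊ with hn
  have hτn : τ ≤ n + 1 := by
    have := Nat.le_ceil τ
    have : (⌈τ⌉₊ : ℝ) ≤ n := by exact_mod_cast Nat.le_add_left _ m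
    linarith [Nat.le_ceil τ]
  obtain ⟨k, hk1, hk2, hk3, hk4⟩ := block_exists τ hτ n hτn
  have hnidx : nIdx k = n := nIdx_eq hk1 hk2
  have hkm : m ≤ k := le_trans (le_trans (Nat.le_add_right m _) (aSeq_ge n)) hk1.le
  obtain ⟨j, rfl⟩ : ∃ j, k = j + 1 := ⟨k - 1, by omega⟩
  have hjk : (j + 1 : ℕ) - 1 = j := rfl
  have hsucc : Hs (j + 1) = Hs j + 1 / (j + 1) := Hs_succ j
  refine ⟨j + 1, hkm, ?_, ?_⟩
  · -- 0 ≤ Bseq k + k τ = (j+1)(τ - tSeq k)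
    have : Bseq (j + 1) + (j + 1 : ℕ) * τ
        = ((j : ℝ) + 1) * (τ - (Hs j - Hs (aSeq n))) := by
      simp only [Bseq, tSeq, hnidx, hjk]
      push_cast
      ring
    rw [this]
    have h0 : 0 ≤ τ - (Hs j - Hs (aSeq n)) := by
      rw [hjk] at hk3; linarith
    positivity
  · have heq : Bseq (j + 1) + (j + 1 : ℕ) * τ
        = ((j : ℝ) + 1) * (τ - (Hs j - Hs (aSeq n))) := by
      simp only [Bseq, tSeq, hnidx, hjk]
      push_cast
      ring
    rw [heq]
    have hub : τ - (Hs j - Hs (aSeq n)) ≤ 1 / (j + 1) := by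
      have := hk4
      rw [hsucc] at this
      linarith
    have hj1 : (0:ℝ) < (j:ℝ) + 1 := by positivity
    calc ((j : ℝ) + 1) * (τ - (Hs j - Hs (aSeq n)))
        ≤ ((j : ℝ) + 1) * (1 / (j + 1)) := by
          apply mul_le_mul_of_nonneg_left hub hj1.le
      _ = 1 := by field_simp

lemma sum_abs_hMat (s : ℝ) :
    ∑ i : Fin 2, ∑ j : Fin 2, |hMat s i j| = 2 + |s| := by
  simp [hMat, Fin.sum_univ_two]
  ring

end Aux19

/-- there is a sequence of kicks `φ_k = h^{β_k}` such that for every period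
`τ ≥ 0` the kicked evolution returns infinitely often to the compact set
`{h^s : s ∈ [0,1]}`; in particular for every `τ ≥ 0` the sequence of entry-sums does not
tend to infinity (the evolution neither is unbounded along the full sequence nor goes to
infinity). -/
theorem stmt_19 :
    ∃ β : ℕ → ℝ, ∀ τ : ℝ, 0 ≤ τ →
      {k : ℕ | ∃ s ∈ Set.Icc (0 : ℝ) 1,
          kickedEvol (fun k => hMat (β k)) τ k = hMat s}.Infinite ∧
      ¬ Tendsto
          (fun k : ℕ => ∑ i : Fin 2, ∑ j : Fin 2,
            |kickedEvol (fun k => hMat (β k)) τ k i j|)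
          atTop atTop := by
  refine ⟨βseq, fun τ hτ => ?_⟩
  have hfreq : ∃ᶠ k in atTop, k ∈ {k : ℕ | ∃ s ∈ Set.Icc (0 : ℝ) 1,
      kickedEvol (fun k => hMat (βseq k)) τ k = hMat s} := by
    rw [frequently_atTop]
    intro m
    obtain ⟨k, hkm, hks⟩ := key τ hτ m
    exact ⟨k, hkm, ⟨Bseq k + k * τ, hks, evol_eq τ k⟩⟩
  constructor
  · exact Nat.frequently_atTop_iff_infinite.mp hfreq
  · intro hT
    have hev := hT.eventually_gt_atTop 3
    obtain ⟨k, hmem, h3⟩ := (hfreq.and_eventually hev).exists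
    obtain ⟨s, hs, hke⟩ := hmem
    have hk3 := h3
    rw [hke, sum_abs_hMat] at hk3
    rw [abs_of_nonneg hs.1] at hk3
    linarith [hs.2]
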